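/- arXiv:2408.14648 — 5 statements merged into one kernel-verified Lean document; each statement's English description precedes it below -/
import Mathlib

section
/- For every integer n ≥ 2, the family F consisting of the maximal chain C♭ = {C_0, C_1, …, C_n} together with the singletons {2}, {3}, …, {n} is induced-2C2-saturated, and |F| = 2n. -/
/-!
The larger set of each chain in an induced `2C₂` has a nonempty proper subset, so in this family
it is not a singleton and lies on `C♭`; two such sets are comparable.

A set `S` outside the family is neither a singleton nor an initial segment, so it has a gap
`a ∉ S`, `b ∈ S`, `a < b` with `b ≥ 2` (`0`-indexed: if the only gap is `0 ∉ S ∋ 1`, another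
element of `S` lies above `1`). Then `{b} ⊊ S` and `{a} ⊊ C_m`, `m = max (a + 1) 2`, form an
induced `2C₂`: `b` separates `S` and `{b}` from `C_m`, and `a` separates `{a}` from `S`.
-/

/-- `F ⊆ 𝒫([n])` contains an induced copy of the poset `2C₂`: four sets
`A ⊊ A'`, `B ⊊ B'`, with each of `A, A'` incomparable to each of `B, B'`. -/
def Contains2C2 {n : ℕ} (F : Finset (Finset (Fin n))) : Prop :=
  ∃ A A' B B' : Finset (Fin n), A ∈ F ∧ A' ∈ F ∧ B ∈ F ∧ B' ∈ F ∧
    A ⊂ A' ∧ B ⊂ B' ∧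
    ¬ A ⊆ B ∧ ¬ B ⊆ A ∧ ¬ A ⊆ B' ∧ ¬ B' ⊆ A ∧
    ¬ A' ⊆ B ∧ ¬ B ⊆ A' ∧ ¬ A' ⊆ B' ∧ ¬ B' ⊆ A'

/-- `F` is induced-`2C₂`-saturated: it is induced-`2C₂`-free, and adding any
missing set creates an induced copy of `2C₂`. -/
def Saturated2C2 {n : ℕ} (F : Finset (Finset (Fin n))) : Prop :=
  ¬ Contains2C2 F ∧ ∀ S : Finset (Fin n), S ∉ F → Contains2C2 (insert S F)

/-- The chain element `C_i = [i] = {1,…,i}` (0-indexed: `{x : Fin n | x < i}`). -/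
def chainC (n i : ℕ) : Finset (Fin n) := Finset.univ.filter (fun x => (x : ℕ) < i)

/-- The maximal chain `C♭ = {C_0, C_1, …, C_n}`. -/
def Cflat (n : ℕ) : Finset (Finset (Fin n)) := (Finset.range (n + 1)).image (chainC n)

/-- The shackle `S_i = [i-1] ∪ {i+1}` (1-indexed elements; 0-indexed:
`{x : Fin n | x + 1 < i or x = i}`), meaningful for `1 ≤ i ≤ n-1`. -/
def shackle (n i : ℕ) : Finset (Fin n) :=
  Finset.univ.filter (fun x => (x : ℕ) + 1 < i ∨ (x : ℕ) = i)

/-- Two sets are comparable if one contains the other. -/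
def Comp {n : ℕ} (A B : Finset (Fin n)) : Prop := A ⊆ B ∨ B ⊆ A

/-- Two sets are incomparable if neither contains the other. -/
def Incomp {n : ℕ} (A B : Finset (Fin n)) : Prop := ¬ A ⊆ B ∧ ¬ B ⊆ A

open Finset

def chainPlusSingletons (n : ℕ) : Finset (Finset (Fin n)) :=
  Cflat n ∪ (univ.filter (fun x : Fin n => 1 ≤ (x : ℕ))).image
    (fun x => ({x} : Finset (Fin n)))

section Contains2C2

variable {n : ℕ} {F : Finset (Finset (Fin n))}

theorem not_contains2C2_of_isChain {C : Set (Finset (Fin n))} (hC : IsChain (· ⊆ ·) C)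
    (hF : ∀ A ∈ F, ∀ A' ∈ F, A.Nonempty → A ⊂ A' → A' ∈ C) : ¬ Contains2C2 F := by
  rintro ⟨A, A', B, B', hA, hA', hB, hB', hAA', hBB', hAB, hBA, -, -, -, -, hA'B', hB'A'⟩
  have hA_ne : A.Nonempty := nonempty_iff_ne_empty.2 fun h => hAB (h ▸ empty_subset B)
  have hB_ne : B.Nonempty := nonempty_iff_ne_empty.2 fun h => hBA (h ▸ empty_subset A)
  exact (hC.total (hF A hA A' hA' hA_ne hAA') (hF B hB B' hB' hB_ne hBB')).elim hA'B' hB'A'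

theorem contains2C2_insert_of_singleton_ssubset {S B B' : Finset (Fin n)} {b : Fin n}
    (hbF : {b} ∈ F) (hBF : B ∈ F) (hB'F : B' ∈ F) (hbS : {b} ⊂ S) (hBB' : B ⊂ B')
    (hbB' : b ∉ B') (hBS : ¬ B ⊆ S) : Contains2C2 (insert S F) := by
  have hb : b ∈ S := singleton_subset_iff.1 hbS.subset
  have hbB : b ∉ B := fun h => hbB' (hBB'.subset h)
  have hB_ne : B.Nonempty := nonempty_iff_ne_empty.2 fun h => hBS (h ▸ empty_subset S)
  have hB_not_sub : ¬ B ⊆ {b} := fun h =>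
    hbB ((hB_ne.subset_singleton_iff.1 h) ▸ mem_singleton_self b)
  refine ⟨{b}, S, B, B', mem_insert_of_mem hbF, mem_insert_self S F,
    mem_insert_of_mem hBF, mem_insert_of_mem hB'F, hbS, hBB', ?_, hB_not_sub, ?_,
    fun h => hB_not_sub (hBB'.subset.trans h), fun h => hbB (h hb), hBS, fun h => hbB' (h hb),
    fun h => hBS (hBB'.subset.trans h)⟩
  · simpa only [singleton_subset_iff] using hbB
  · simpa only [singleton_subset_iff] using hbB'

end Contains2C2

section ChainC

variable {n : ℕ}

@[simp]
theorem mem_chainC {i : ℕ} {x : Fin n} : x ∈ chainC n i ↔ (x : ℕ) < i := by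
  simp only [chainC, mem_filter, mem_univ, true_and]

theorem card_chainC {i : ℕ} (hi : i ≤ n) : (chainC n i).card = i := by
  rw [chainC, Fin.card_filter_val_lt, min_eq_right hi]

theorem chainC_mono : Monotone (chainC n) := fun _ _ hij _ hx => by
  rw [mem_chainC] at hx ⊢
  omega

theorem isChain_Cflat : IsChain (· ⊆ ·) (Cflat n : Set (Finset (Fin n))) :=
  chainC_mono.isChain_range.mono (by simp [Cflat, Set.image_subset_iff])

theorem card_Cflat : (Cflat n).card = n + 1 := by
  rw [Cflat, card_image_of_injOn, card_range]
  intro i hi j hj hij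
  simp only [coe_range, Set.mem_Iio] at hi hj
  rw [← card_chainC (n := n) (by omega : i ≤ n), hij, card_chainC (by omega)]

theorem chainC_self : chainC n n = univ := by
  ext x
  simp

theorem exists_notMem_lt_mem_of_ne_chainC {S : Finset (Fin n)} (hS : ∀ k ≤ n, S ≠ chainC n k) :
    ∃ a ∉ S, ∃ b ∈ S, a < b := by
  have hSc : Sᶜ.Nonempty := by
    by_contra! h
    exact hS n le_rfl (by rw [chainC_self, ← compl_eq_empty_iff, h])
  set a := Sᶜ.min' hSc
  have ha : a ∉ S := mem_compl.1 (min'_mem _ _)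
  have hlow : chainC n a ⊆ S := fun x hx => by
    by_contra hxS
    exact (mem_chainC.1 hx).not_ge (min'_le _ x (mem_compl.2 hxS))
  obtain ⟨b, hb, hba⟩ := exists_of_ssubset (hlow.ssubset_of_ne (hS a a.is_le').symm)
  rw [mem_chainC, not_lt, ← Fin.le_def] at hba
  exact ⟨a, ha, b, hb, lt_of_le_of_ne hba fun h => ha (h ▸ hb)⟩

end ChainC

section ChainPlusSingletons

variable {n : ℕ}

theorem mem_chainPlusSingletons {S : Finset (Fin n)} :
    S ∈ chainPlusSingletons n ↔ (∃ k ≤ n, S = chainC n k) ∨ ∃ x, S = {x} := by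
  simp only [chainPlusSingletons, Cflat, mem_union, mem_image, mem_range,
    mem_filter, mem_univ, true_and]
  constructor
  · rintro (⟨k, hk, rfl⟩ | ⟨x, -, rfl⟩)
    · exact Or.inl ⟨k, Nat.le_of_lt_succ hk, rfl⟩
    · exact Or.inr ⟨x, rfl⟩
  · rintro (⟨k, hk, rfl⟩ | ⟨x, rfl⟩)
    · exact Or.inl ⟨k, Nat.lt_succ_of_le hk, rfl⟩
    by_cases hx : 1 ≤ (x : ℕ)
    · exact Or.inr ⟨x, hx, rfl⟩
    · refine Or.inl ⟨1, by omega, ?_⟩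
      ext y
      simp only [mem_chainC, mem_singleton, Fin.ext_iff]
      omega

theorem chainC_mem_chainPlusSingletons {k : ℕ} (hk : k ≤ n) : chainC n k ∈ chainPlusSingletons n :=
  mem_chainPlusSingletons.2 (Or.inl ⟨k, hk, rfl⟩)

theorem singleton_mem_chainPlusSingletons (x : Fin n) : {x} ∈ chainPlusSingletons n :=
  mem_chainPlusSingletons.2 (Or.inr ⟨x, rfl⟩)

theorem not_contains2C2_chainPlusSingletons : ¬ Contains2C2 (chainPlusSingletons n) := by
  refine not_contains2C2_of_isChain isChain_Cflat fun A _ A' hA' hA hAA' => ?_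
  obtain ⟨k, hk, rfl⟩ | ⟨x, rfl⟩ := mem_chainPlusSingletons.1 hA'
  · exact mem_image_of_mem _ (mem_range.2 (Nat.lt_succ_of_le hk))
  · exact absurd (ssubset_singleton_iff.1 hAA') hA.ne_empty

theorem exists_gap_of_notMem_chainPlusSingletons {S : Finset (Fin n)}
    (hS : S ∉ chainPlusSingletons n) : ∃ a ∉ S, ∃ b ∈ S, a < b ∧ 2 ≤ (b : ℕ) := by
  rw [mem_chainPlusSingletons, not_or] at hS
  obtain ⟨a, ha, b, hb, hab⟩ := exists_notMem_lt_mem_of_ne_chainC fun k hk h => hS.1 ⟨k, hk, h⟩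
  by_cases hb2 : 2 ≤ (b : ℕ)
  · exact ⟨a, ha, b, hb, hab, hb2⟩
  obtain ⟨c, hc, hcb⟩ := ((nontrivial_iff_ne_singleton hb).2 fun h => hS.2 ⟨b, h⟩).exists_ne b
  have hca : c ≠ a := fun h => ha (h ▸ hc)
  rw [Fin.lt_def] at hab
  rw [Ne, Fin.ext_iff] at hcb hca
  exact ⟨a, ha, c, hc, by rw [Fin.lt_def]; omega, by omega⟩

theorem contains2C2_insert_chainPlusSingletons {S : Finset (Fin n)}
    (hS : S ∉ chainPlusSingletons n) : Contains2C2 (insert S (chainPlusSingletons n)) := by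
  obtain ⟨a, ha, b, hb, hab, hb2⟩ := exists_gap_of_notMem_chainPlusSingletons hS
  rw [Fin.lt_def] at hab
  set m := max ((a : ℕ) + 1) 2
  have hmb : m ≤ b := max_le hab hb2
  have hmn : m ≤ n := hmb.trans b.is_lt.le
  refine contains2C2_insert_of_singleton_ssubset (singleton_mem_chainPlusSingletons b)
    (singleton_mem_chainPlusSingletons a) (chainC_mem_chainPlusSingletons hmn) ?_ ?_ ?_ ?_
  · exact (singleton_subset_iff.2 hb).ssubset_of_ne fun h =>
      hS (h ▸ singleton_mem_chainPlusSingletons b)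
  · refine (singleton_subset_iff.2 (mem_chainC.2 (by omega))).ssubset_of_ne fun h => ?_
    have := congrArg card h
    rw [card_singleton, card_chainC hmn] at this
    omega
  · rw [mem_chainC]
    omega
  · rwa [singleton_subset_iff]

theorem card_univ_filter_one_le : (univ.filter (fun x : Fin n => 1 ≤ (x : ℕ))).card = n - 1 := by
  have h := card_filter_add_card_filter_not (s := univ) (fun x : Fin n => 1 ≤ (x : ℕ))
  simp only [not_le, Fin.card_filter_val_lt, card_univ, Fintype.card_fin] at h
  omega

theorem card_chainPlusSingletons (hn : n ≠ 0) : (chainPlusSingletons n).card = 2 * n := by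
  have hdisj : Disjoint (Cflat n) ((univ.filter (fun x : Fin n => 1 ≤ (x : ℕ))).image
      (fun x => ({x} : Finset (Fin n)))) := by
    simp only [disjoint_right, mem_image, mem_filter, mem_univ, true_and, Cflat, mem_range,
      not_exists, not_and]
    rintro _ ⟨x, hx, rfl⟩ k - hk
    have hxk : (x : ℕ) < k := mem_chainC.1 (hk ▸ mem_singleton_self x)
    have h0 : (⟨0, x.pos⟩ : Fin n) ∈ ({x} : Finset (Fin n)) :=
      hk ▸ mem_chainC.2 (by rw [Fin.val_mk]; omega)
    rw [mem_singleton, Fin.ext_iff, Fin.val_mk] at h0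
    omega
  rw [chainPlusSingletons, card_union_of_disjoint hdisj, card_Cflat,
    card_image_of_injective _ singleton_injective, card_univ_filter_one_le]
  omega

end ChainPlusSingletons

/-- For every `n ≥ 2`, the family consisting of the maximal chain `C♭` together
with the singletons `{2}, {3}, …, {n}` is induced-`2C₂`-saturated and has
size `2n`. -/
theorem chain_plus_singletons_saturated (n : ℕ) (hn : 2 ≤ n)
    (F : Finset (Finset (Fin n)))
    (hF : F = Cflat n ∪
      (Finset.univ.filter (fun x : Fin n => 1 ≤ (x : ℕ))).image
        (fun x => ({x} : Finset (Fin n)))) :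
    Saturated2C2 F ∧ F.card = 2 * n := by
  rw [hF, ← chainPlusSingletons]
  exact ⟨⟨not_contains2C2_chainPlusSingletons, fun _ => contains2C2_insert_chainPlusSingletons⟩,
    card_chainPlusSingletons (by omega)⟩
end

section
/- For every integer n ≥ 2, there exists an induced-2C2-saturated family F of subsets of [n] with |F| = 2n. In particular sat*(n, 2C2) ≤ 2n. -/
namespace TwoC2Aux

/-- The prefix `{0, 1, ..., k-1}` inside `Fin n`. -/
def pref (n k : ℕ) : Finset (Fin n) := Finset.univ.filter (fun x => x.val < k)

@[simp] lemma mem_pref {n k : ℕ} {x : Fin n} : x ∈ pref n k ↔ x.val < k := by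
  simp [pref]

lemma pref_mono {n k l : ℕ} (h : k ≤ l) : pref n k ⊆ pref n l := by
  intro x hx
  rw [mem_pref] at hx ⊢
  omega

/-- The saturated family: all prefixes together with all singletons `{i}`, `i ≠ 0`. -/
def Fam (n : ℕ) : Finset (Finset (Fin n)) :=
  ((Finset.range (n+1)).image (pref n)) ∪
  ((Finset.univ.filter (fun i : Fin n => i.val ≠ 0)).image (fun i => {i}))

lemma mem_Fam {n : ℕ} {A : Finset (Fin n)} :
    A ∈ Fam n ↔ (∃ k, k ≤ n ∧ pref n k = A) ∨ (∃ i : Fin n, i.val ≠ 0 ∧ {i} = A) := by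
  simp [Fam, Finset.mem_union, Finset.mem_image, Finset.mem_range, Nat.lt_succ_iff]

lemma top_is_pref {n : ℕ} {A A' B : Finset (Fin n)} (hA' : A' ∈ Fam n)
    (h1 : A ⊂ A') (h2 : ¬ A ⊆ B) : ∃ k, k ≤ n ∧ pref n k = A' := by
  rcases mem_Fam.mp hA' with h | ⟨i, _, hi⟩
  · exact h
  · exfalso
    rcases Finset.subset_singleton_iff.mp (hi ▸ h1.subset) with rfl | rfl
    · exact h2 (Finset.empty_subset B)
    · exact h1.ne hi

lemma free (n : ℕ) : ¬ Contains2C2 (Fam n) := by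
  rintro ⟨A, A', B, B', hA, hA', hB, hB', hAA, hBB, h1, h2, h3, h4, h5, h6, h7, h8⟩
  obtain ⟨k, hk, rfl⟩ := top_is_pref hA' hAA h1
  obtain ⟨l, hl, rfl⟩ := top_is_pref hB' hBB h2
  rcases le_total k l with h | h
  · exact h7 (pref_mono h)
  · exact h8 (pref_mono h)

lemma sat {n : ℕ} (hn : 2 ≤ n) (S : Finset (Fin n)) (hS : S ∉ Fam n) :
    Contains2C2 (insert S (Fam n)) := by
  -- S is nonempty
  have hne : S.Nonempty := by
    rcases S.eq_empty_or_nonempty with rfl | h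
    · exact absurd (mem_Fam.mpr (Or.inl ⟨0, by omega, by ext x; simp⟩)) hS
    · exact h
  set m : Fin n := S.max' hne with hmdef
  have hmS : m ∈ S := S.max'_mem hne
  have hmax : ∀ x ∈ S, x ≤ m := fun x hx => S.le_max' x hx
  -- there is a gap a < m with a ∉ S
  have hgap : ∃ a : Fin n, a.val < m.val ∧ a ∉ S := by
    by_contra h
    push_neg at h
    apply hS
    refine mem_Fam.mpr (Or.inl ⟨m.val + 1, by omega, ?_⟩)
    ext x
    rw [mem_pref]
    constructor
    · intro hx
      rcases Nat.lt_or_ge x.val m.val with h' | h'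
      · exact h x h'
      · have : x = m := Fin.ext (by omega)
        exact this ▸ hmS
    · intro hx
      have := hmax x hx
      rw [Fin.le_def] at this
      omega
  obtain ⟨a, ha1, ha2⟩ := hgap
  have hm0 : m.val ≠ 0 := by omega
  have hSm : S ≠ {m} := by
    intro h
    exact hS (mem_Fam.mpr (Or.inr ⟨m, hm0, h.symm⟩))
  have hm2 : 2 ≤ m.val := by
    by_contra h
    have hm1 : m.val = 1 := by omega
    apply hSm
    ext x
    rw [Finset.mem_singleton]
    constructor
    · intro hx
      have hxm := hmax x hx
      rw [Fin.le_def] at hxm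
      rcases Nat.lt_or_ge x.val 1 with h' | h'
      · have : x = a := Fin.ext (by omega)
        exact absurd (this ▸ hx) ha2
      · exact Fin.ext (by omega)
    · rintro rfl; exact hmS
  have h0n : 0 < n := by omega
  have h1n : 1 < n := by omega
  set y0 : Fin n := ⟨0, h0n⟩ with hy0
  set y1 : Fin n := ⟨1, h1n⟩ with hy1
  -- memberships
  have hmF : ({m} : Finset (Fin n)) ∈ Fam n := mem_Fam.mpr (Or.inr ⟨m, hm0, rfl⟩)
  have haF : ({a} : Finset (Fin n)) ∈ Fam n := by
    rcases Nat.eq_zero_or_pos a.val with h | h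
    · refine mem_Fam.mpr (Or.inl ⟨1, by omega, ?_⟩)
      ext x
      rw [mem_pref, Finset.mem_singleton]
      constructor
      · intro hx; exact Fin.ext (by omega)
      · rintro rfl; omega
    · exact mem_Fam.mpr (Or.inr ⟨a, by omega, rfl⟩)
  have hpF : pref n m.val ∈ Fam n := mem_Fam.mpr (Or.inl ⟨m.val, by omega, rfl⟩)
  refine ⟨{m}, S, {a}, pref n m.val,
    Finset.mem_insert_of_mem hmF, Finset.mem_insert_self S _,
    Finset.mem_insert_of_mem haF, Finset.mem_insert_of_mem hpF, ?_, ?_, ?_, ?_, ?_, ?_, ?_, ?_, ?_, ?_⟩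
  · exact lt_of_le_of_ne (Finset.singleton_subset_iff.mpr hmS) (fun h => hSm h.symm)
  · -- {a} ⊂ pref n m.val
    refine lt_of_le_of_ne (Finset.singleton_subset_iff.mpr (mem_pref.mpr ha1)) ?_
    intro h
    have h0 : y0 ∈ pref n m.val := mem_pref.mpr (by simp [hy0]; omega)
    have h1 : y1 ∈ pref n m.val := mem_pref.mpr (by simp [hy1]; omega)
    rw [← h, Finset.mem_singleton] at h0 h1
    have : y0 = y1 := h0.trans h1.symm
    simp [hy0, hy1, Fin.ext_iff] at this
  · -- ¬ {m} ⊆ {a}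
    intro h
    have := Finset.mem_singleton.mp (h (Finset.mem_singleton_self m))
    rw [Fin.ext_iff] at this; omega
  · -- ¬ {a} ⊆ {m}
    intro h
    have := Finset.mem_singleton.mp (h (Finset.mem_singleton_self a))
    rw [Fin.ext_iff] at this; omega
  · -- ¬ {m} ⊆ pref n m.val
    intro h
    have := mem_pref.mp (h (Finset.mem_singleton_self m))
    omega
  · -- ¬ pref n m.val ⊆ {m}
    intro h
    have := Finset.mem_singleton.mp (h (mem_pref.mpr (show y0.val < m.val by simp [hy0]; omega)))
    rw [Fin.ext_iff] at this; simp [hy0] at this; omega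
  · -- ¬ S ⊆ {a}
    intro h
    have := Finset.mem_singleton.mp (h hmS)
    rw [Fin.ext_iff] at this; omega
  · -- ¬ {a} ⊆ S
    intro h
    exact ha2 (h (Finset.mem_singleton_self a))
  · -- ¬ S ⊆ pref n m.val
    intro h
    have := mem_pref.mp (h hmS)
    omega
  · -- ¬ pref n m.val ⊆ S
    intro h
    exact ha2 (h (mem_pref.mpr ha1))

lemma card_Fam {n : ℕ} (hn : 2 ≤ n) : (Fam n).card = 2 * n := by
  haveI : NeZero n := ⟨by omega⟩
  have hdisj : Disjoint ((Finset.range (n+1)).image (pref n))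
      ((Finset.univ.filter (fun i : Fin n => i.val ≠ 0)).image (fun i => {i})) := by
    rw [Finset.disjoint_left]
    rintro A hA hB
    simp only [Finset.mem_image, Finset.mem_range, Finset.mem_filter] at hA hB
    obtain ⟨k, hk, rfl⟩ := hA
    obtain ⟨i, ⟨-, hi0⟩, hi⟩ := hB
    have hik : i ∈ pref n k := by rw [← hi]; exact Finset.mem_singleton_self i
    rw [mem_pref] at hik
    have h0 : (⟨0, by omega⟩ : Fin n) ∈ pref n k := mem_pref.mpr (by simpa using by omega)
    rw [← hi, Finset.mem_singleton] at h0
    rw [Fin.ext_iff] at h0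
    exact hi0 h0.symm
  have hinj : Set.InjOn (pref n) (Finset.range (n+1)) := by
    intro k hk l hl h
    simp only [Finset.coe_range, Set.mem_Iio] at hk hl
    by_contra hne
    have key : ∀ k l : ℕ, k < l → l ≤ n → pref n k ≠ pref n l := by
      intro k l hkl hln heq
      have : (⟨k, by omega⟩ : Fin n) ∈ pref n l := mem_pref.mpr (by simpa using hkl)
      rw [← heq, mem_pref] at this
      simp at this
    rcases Nat.lt_or_ge k l with h' | h'
    · exact key k l h' (by omega) h
    · exact key l k (by omega) (by omega) h.symm
  have hinj2 : Set.InjOn (fun i : Fin n => ({i} : Finset (Fin n)))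
      (Finset.univ.filter (fun i : Fin n => i.val ≠ 0)) := fun x _ y _ h =>
    Finset.singleton_injective h
  rw [Fam, Finset.card_union_of_disjoint hdisj, Finset.card_image_of_injOn hinj,
    Finset.card_image_of_injOn hinj2, Finset.card_range]
  have : (Finset.univ.filter (fun i : Fin n => i.val ≠ 0)) = Finset.univ.erase 0 := by
    ext x
    rw [Finset.mem_filter, Finset.mem_erase]
    simp only [Finset.mem_univ, and_true, true_and]
    exact ⟨fun h h' => h (by rw [h']; simp), fun h h' => h (Fin.ext (by rw [h']; simp))⟩
  rw [this, Finset.card_erase_of_mem (Finset.mem_univ _), Finset.card_univ, Fintype.card_fin]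
  omega

end TwoC2Aux

/-- For every `n ≥ 2` there exists an induced-`2C₂`-saturated family of
subsets of `[n]` of size exactly `2n`; hence `sat*(n, 2C₂) ≤ 2n`. -/
theorem exists_saturated_of_size_two_n (n : ℕ) (hn : 2 ≤ n) :
    ∃ F : Finset (Finset (Fin n)), Saturated2C2 F ∧ F.card = 2 * n := by
  exact ⟨TwoC2Aux.Fam n, ⟨TwoC2Aux.free n, TwoC2Aux.sat hn⟩, TwoC2Aux.card_Fam hn⟩
end

section
/- Every induced-2C2-saturated family F of subsets of [n] contains both the empty set ∅ and the full set [n]. -/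
lemma mem_of_mem_insert_of_not_comparable {α : Type*} [DecidableEq α] [LE α] {s : Finset α}
    {a b c : α} (ha : ∀ x, a ≤ x ∨ x ≤ a) (hb : b ∈ insert a s) (hbc : ¬ b ≤ c)
    (hcb : ¬ c ≤ b) : b ∈ s := by
  rcases Finset.mem_insert.1 hb with rfl | hb
  · exact ((ha c).elim hbc hcb).elim
  · exact hb

section

variable {n : ℕ} {F : Finset (Finset (Fin n))} {S : Finset (Fin n)}

lemma Contains2C2.of_insert_of_comparable (hS : ∀ X, S ⊆ X ∨ X ⊆ S)
    (h : Contains2C2 (insert S F)) : Contains2C2 F := by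
  obtain ⟨A, A', B, B', hA, hA', hB, hB', hAA', hBB', hAB, hBA, hAB', hB'A, hA'B, hBA', hA'B',
    hB'A'⟩ := h
  exact ⟨A, A', B, B', mem_of_mem_insert_of_not_comparable hS hA hAB hBA,
    mem_of_mem_insert_of_not_comparable hS hA' hA'B hBA',
    mem_of_mem_insert_of_not_comparable hS hB hBA hAB,
    mem_of_mem_insert_of_not_comparable hS hB' hB'A hAB', hAA', hBB', hAB, hBA, hAB', hB'A,
    hA'B, hBA', hA'B', hB'A'⟩

lemma Saturated2C2.mem_of_comparable (hF : Saturated2C2 F) (hS : ∀ X, S ⊆ X ∨ X ⊆ S) :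
    S ∈ F := by
  by_contra hSF
  exact hF.1 ((hF.2 S hSF).of_insert_of_comparable hS)

end

/-- Every induced-`2C₂`-saturated family contains both `∅` and `[n]`. -/
theorem saturated_contains_empty_and_full (n : ℕ)
    (F : Finset (Finset (Fin n))) (hF : Saturated2C2 F) :
    (∅ : Finset (Fin n)) ∈ F ∧ (Finset.univ : Finset (Fin n)) ∈ F :=
  ⟨hF.mem_of_comparable fun T => .inl T.empty_subset,
    hF.mem_of_comparable fun T => .inr T.subset_univ⟩
end

section
/- If F is an induced-2C2-free family of subsets of [n], then for any two sets F_1, F_2 ∈ F, the open downsets are comparable: either D_F(F_1) ⊆ D_F(F_2) or D_F(F_2) ⊆ D_F(F_1). -/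
/-!
If `A ∈ D_F(F₁) \ D_F(F₂)` and `B ∈ D_F(F₂) \ D_F(F₁)`, the chains `A ⊊ F₁` and `B ⊊ F₂` already
form an induced `2C₂`: every comparability between them would put `A` below `F₂` or `B` below `F₁`.
-/

theorem not_le_of_crossed_chains {α : Type*} [PartialOrder α] {a x b y : α}
    (hax : a < x) (hby : b < y) (hay : ¬ a < y) (hbx : ¬ b < x) :
    ¬ a ≤ b ∧ ¬ a ≤ y ∧ ¬ x ≤ b ∧ ¬ x ≤ y := by
  have hxy : ¬ x ≤ y := fun h => hay (hax.trans_le h)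
  refine ⟨fun h => hay (h.trans_lt hby), fun h => ?_, fun h => hxy (h.trans hby.le), hxy⟩
  rcases h.lt_or_eq with h | rfl
  · exact hay h
  · exact hbx (hby.trans hax)

theorem contains2C2_of_ssubset_of_not_ssubset {n : ℕ} {F : Finset (Finset (Fin n))}
    {A A' B B' : Finset (Fin n)} (hA : A ∈ F) (hA' : A' ∈ F) (hB : B ∈ F) (hB' : B' ∈ F)
    (hAA' : A ⊂ A') (hBB' : B ⊂ B') (hnAB' : ¬ A ⊂ B') (hnBA' : ¬ B ⊂ A') :
    Contains2C2 F := by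
  obtain ⟨hAB, hAB', hA'B, hA'B'⟩ := not_le_of_crossed_chains hAA' hBB' hnAB' hnBA'
  obtain ⟨hBA, hBA', hB'A, hB'A'⟩ := not_le_of_crossed_chains hBB' hAA' hnBA' hnAB'
  exact ⟨A, A', B, B', hA, hA', hB, hB', hAA', hBB',
    hAB, hBA, hAB', hB'A, hA'B, hBA', hA'B', hB'A'⟩

/-- If `F` is induced-`2C₂`-free, then the open downsets
`D_F(S) = {G ∈ F : G ⊊ S}` of any two members of `F` are comparable. -/
theorem downsets_comparable (n : ℕ)
    (F : Finset (Finset (Fin n))) (hF : ¬ Contains2C2 F)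
    (F₁ F₂ : Finset (Fin n)) (h₁ : F₁ ∈ F) (h₂ : F₂ ∈ F) :
    F.filter (fun G => G ⊂ F₁) ⊆ F.filter (fun G => G ⊂ F₂) ∨
    F.filter (fun G => G ⊂ F₂) ⊆ F.filter (fun G => G ⊂ F₁) := by
  by_contra! hc
  obtain ⟨A, hA, hA₂⟩ := Finset.not_subset.mp hc.1
  obtain ⟨B, hB, hB₁⟩ := Finset.not_subset.mp hc.2
  rw [Finset.mem_filter] at hA hB hA₂ hB₁
  exact hF <| contains2C2_of_ssubset_of_not_ssubset hA.1 h₁ hB.1 h₂ hA.2 hB.2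
    (fun h => hA₂ ⟨hA.1, h⟩) (fun h => hB₁ ⟨hB.1, h⟩)
end

section
/- Let F be an induced-2C2-saturated family of subsets of [n] with C♭ ⊆ F, and suppose W ∈ F \ C♭ is itself a shackle, say W = S_k with 1 ≤ k ≤ n−1. Then for every i ∈ {1,…,n−1} with S_i ∉ F such that W witnesses S_i, one has i ∈ {k−1, k+1}. In particular, W witnesses at most two shackles. -/
/-- `W ∈ F` witnesses the shackle `S ∉ F` if `F ∪ {S}` contains an induced copy
of `2C₂` having `W` as one of its four sets. -/
def Witnesses {n : ℕ} (F : Finset (Finset (Fin n))) (W S : Finset (Fin n)) : Prop :=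
  ∃ A A' B B' : Finset (Fin n),
    A ∈ insert S F ∧ A' ∈ insert S F ∧ B ∈ insert S F ∧ B' ∈ insert S F ∧
    A ⊂ A' ∧ B ⊂ B' ∧
    ¬ A ⊆ B ∧ ¬ B ⊆ A ∧ ¬ A ⊆ B' ∧ ¬ B' ⊆ A ∧
    ¬ A' ⊆ B ∧ ¬ B ⊆ A' ∧ ¬ A' ⊆ B' ∧ ¬ B' ⊆ A' ∧
    (W = A ∨ W = A' ∨ W = B ∨ W = B')

lemma chainC_mono_s10 {n a b : ℕ} (h : a ≤ b) : chainC n a ⊆ chainC n b := by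
  intro x hx; simp [chainC] at *; omega

lemma chainC_subset_shackle {n j k : ℕ} (h : j < k) : chainC n j ⊆ shackle n k := by
  intro x hx; simp [chainC, shackle] at *; omega

lemma shackle_subset_chainC {n k j : ℕ} (h : k < j) : shackle n k ⊆ chainC n j := by
  intro x hx; simp [chainC, shackle] at *; omega

lemma shackle_subset_shackle {n i k : ℕ} (h : i + 2 ≤ k) : shackle n i ⊆ shackle n k := by
  intro x hx; simp [shackle] at *; omega

lemma shackle_not_subset {n i k : ℕ} (hin : i < n) (h1 : i ≠ k) (h2 : ¬ i + 2 ≤ k) :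
    ¬ shackle n i ⊆ shackle n k := by
  intro hs
  have hmem : (⟨i, hin⟩ : Fin n) ∈ shackle n i := by simp [shackle]
  have := hs hmem
  simp [shackle] at this
  omega

lemma chain_mem {n j : ℕ} (h : j ≤ n) {F : Finset (Finset (Fin n))} (hC : Cflat n ⊆ F) :
    chainC n j ∈ F := by
  apply hC
  simp only [Cflat, Finset.mem_image, Finset.mem_range]
  exact ⟨j, by omega, rfl⟩

lemma key_sandwich {n k : ℕ} {F : Finset (Finset (Fin n))} (hfree : ¬ Contains2C2 F)
    (hC : Cflat n ⊆ F) (hWF : shackle n k ∈ F) (hk1 : 1 ≤ k) (hkn : k + 1 ≤ n)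
    {B B' : Finset (Fin n)} (hB : B ∈ F) (hB' : B' ∈ F) (hBB' : B ⊂ B')
    (h1 : ¬ shackle n k ⊆ B) (h2 : ¬ B ⊆ shackle n k)
    (h3 : ¬ shackle n k ⊆ B') (h4 : ¬ B' ⊆ shackle n k) :
    chainC n (k - 1) ⊆ B' ∧ B ⊆ chainC n (k + 1) := by
  have hkn' : k < n := by omega
  have hc1 : chainC n (k - 1) ⊂ shackle n k := by
    refine ⟨chainC_subset_shackle (by omega), fun hs => ?_⟩
    have hmem : (⟨k, hkn'⟩ : Fin n) ∈ shackle n k := by simp [shackle]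
    have := hs hmem
    simp [chainC] at this
    omega
  have hc2 : shackle n k ⊂ chainC n (k + 1) := by
    refine ⟨shackle_subset_chainC (by omega), fun hs => ?_⟩
    have hmem : (⟨k - 1, by omega⟩ : Fin n) ∈ chainC n (k + 1) := by
      simp [chainC]
    have := hs hmem
    simp [shackle] at this
    omega
  constructor
  · by_contra h
    exact hfree ⟨chainC n (k - 1), shackle n k, B, B',
      chain_mem (by omega) hC, hWF, hB, hB', hc1, hBB',
      fun hx => h (hx.trans hBB'.subset), fun hx => h2 (hx.trans hc1.subset),
      h, fun hx => h4 (hx.trans hc1.subset), h1, h2, h3, h4⟩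
  · by_contra h
    exact hfree ⟨shackle n k, chainC n (k + 1), B, B',
      hWF, chain_mem (by omega) hC, hB, hB', hc2, hBB',
      h1, h2, h3, h4,
      fun hx => h1 (hc2.subset.trans hx), h,
      fun hx => h3 (hc2.subset.trans hx), fun hx => h (hBB'.subset.trans hx)⟩

lemma same_chain_false {n k i : ℕ} {F : Finset (Finset (Fin n))} (hfree : ¬ Contains2C2 F)
    (hC : Cflat n ⊆ F) (hWF : shackle n k ∈ F) (hSF : shackle n i ∉ F)
    (hk1 : 1 ≤ k) (hkn : k + 1 ≤ n) (hi1 : 1 ≤ i) (hin : i + 1 ≤ n)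
    {B B' : Finset (Fin n)}
    (hB : B ∈ insert (shackle n i) F) (hB' : B' ∈ insert (shackle n i) F)
    (hBB' : B ⊂ B')
    (k1 : ¬ shackle n k ⊆ B) (k2 : ¬ B ⊆ shackle n k)
    (k3 : ¬ shackle n k ⊆ B') (k4 : ¬ B' ⊆ shackle n k)
    (i1 : ¬ shackle n i ⊆ B) (i2 : ¬ B ⊆ shackle n i)
    (i3 : ¬ shackle n i ⊆ B') (i4 : ¬ B' ⊆ shackle n i)
    (hcomp : shackle n i ⊆ shackle n k ∨ shackle n k ⊆ shackle n i) : False := by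
  have hik : i ≠ k := fun h => hSF (by rw [h]; exact hWF)
  have hBF : B ∈ F := by
    rcases Finset.mem_insert.1 hB with h | h
    · exact absurd (by rw [h] : shackle n i ⊆ B) i1
    · exact h
  have hB'F : B' ∈ F := by
    rcases Finset.mem_insert.1 hB' with h | h
    · exact absurd (by rw [h] : shackle n i ⊆ B') i3
    · exact h
  have hkey := key_sandwich hfree hC hWF hk1 hkn hBF hB'F hBB' k1 k2 k3 k4
  rcases hcomp with h | h
  · have hle : i + 2 ≤ k := by
      by_contra hc
      exact shackle_not_subset (by omega) hik hc h
    exact i3 ((shackle_subset_chainC (Nat.lt_succ_self i)).trans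
      ((chainC_mono_s10 (by omega : i + 1 ≤ k - 1)).trans hkey.1))
  · have hle : k + 2 ≤ i := by
      by_contra hc
      exact shackle_not_subset (by omega) (Ne.symm hik) hc h
    exact i2 (hkey.2.trans (chainC_subset_shackle (by omega)))

lemma diff_chain_conclude {n k i : ℕ} (hik : i ≠ k)
    (h1 : ¬ shackle n i ⊆ shackle n k) (h2 : ¬ shackle n k ⊆ shackle n i) :
    i + 1 = k ∨ i = k + 1 := by
  by_contra h
  push_neg at h
  rcases (by omega : i + 2 ≤ k ∨ k + 2 ≤ i) with hc | hc
  · exact h1 (shackle_subset_shackle hc)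
  · exact h2 (shackle_subset_shackle hc)

/-- If `W ∈ F \ C♭` is itself a shackle `S_k`, then any missing shackle `S_i`
witnessed by `W` has `i ∈ {k-1, k+1}`; in particular `W` witnesses at most two
shackles. -/
theorem shackle_witnesses_at_most_two (n : ℕ)
    (F : Finset (Finset (Fin n))) (hF : Saturated2C2 F) (hC : Cflat n ⊆ F)
    (W : Finset (Fin n)) (hW : W ∈ F) (hWc : W ∉ Cflat n)
    (k : ℕ) (hk1 : 1 ≤ k) (hkn : k + 1 ≤ n) (hWk : W = shackle n k) :
    (∀ i, 1 ≤ i → i + 1 ≤ n → shackle n i ∉ F →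
      Witnesses F W (shackle n i) → (i + 1 = k ∨ i = k + 1)) ∧
    ¬ ∃ i₁ i₂ i₃ : ℕ, i₁ ≠ i₂ ∧ i₁ ≠ i₃ ∧ i₂ ≠ i₃ ∧
      (1 ≤ i₁ ∧ i₁ + 1 ≤ n ∧ shackle n i₁ ∉ F ∧ Witnesses F W (shackle n i₁)) ∧
      (1 ≤ i₂ ∧ i₂ + 1 ≤ n ∧ shackle n i₂ ∉ F ∧ Witnesses F W (shackle n i₂)) ∧
      (1 ≤ i₃ ∧ i₃ + 1 ≤ n ∧ shackle n i₃ ∉ F ∧ Witnesses F W (shackle n i₃)) := by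
  subst hWk
  have hfree := hF.1
  have main : ∀ i, 1 ≤ i → i + 1 ≤ n → shackle n i ∉ F →
      Witnesses F (shackle n k) (shackle n i) → (i + 1 = k ∨ i = k + 1) := by
    intro i hi1 hin hSF hwit
    obtain ⟨A, A', B, B', hA, hA', hB, hB', hAA', hBB',
      n1, n2, n3, n4, n5, n6, n7, n8, hWpos⟩ := hwit
    have hik : i ≠ k := fun h => hSF (by rw [h]; exact hW)
    have hSne : shackle n i ≠ shackle n k := fun h => hSF (by rw [h]; exact hW)
    have hSpos : shackle n i = A ∨ shackle n i = A' ∨ shackle n i = B ∨ shackle n i = B' := by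
      by_contra h
      push_neg at h
      obtain ⟨e1, e2, e3, e4⟩ := h
      have mem : ∀ X, X ∈ insert (shackle n i) F → shackle n i ≠ X → X ∈ F := by
        intro X hX hne
        rcases Finset.mem_insert.1 hX with h | h
        · exact absurd h.symm hne
        · exact h
      exact hfree ⟨A, A', B, B', mem A hA e1, mem A' hA' e2, mem B hB e3, mem B' hB' e4,
        hAA', hBB', n1, n2, n3, n4, n5, n6, n7, n8⟩
    rcases hWpos with hw | hw | hw | hw <;> rcases hSpos with hs | hs | hs | hs
    · exact absurd (hs.trans hw.symm) hSne
    · -- W = A, S = A' : same chain, W ⊂ S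
      exact (same_chain_false hfree hC hW hSF hk1 hkn hi1 hin hB hB' hBB'
        (hw ▸ n1) (hw ▸ n2) (hw ▸ n3) (hw ▸ n4)
        (hs ▸ n5) (hs ▸ n6) (hs ▸ n7) (hs ▸ n8)
        (Or.inr (by rw [hw, hs]; exact hAA'.subset))).elim
    · exact diff_chain_conclude hik (hs ▸ hw ▸ n2) (hs ▸ hw ▸ n1)
    · exact diff_chain_conclude hik (hs ▸ hw ▸ n4) (hs ▸ hw ▸ n3)
    · -- W = A', S = A : same chain, S ⊂ W
      exact (same_chain_false hfree hC hW hSF hk1 hkn hi1 hin hB hB' hBB'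
        (hw ▸ n5) (hw ▸ n6) (hw ▸ n7) (hw ▸ n8)
        (hs ▸ n1) (hs ▸ n2) (hs ▸ n3) (hs ▸ n4)
        (Or.inl (by rw [hw, hs]; exact hAA'.subset))).elim
    · exact absurd (hs.trans hw.symm) hSne
    · exact diff_chain_conclude hik (hs ▸ hw ▸ n6) (hs ▸ hw ▸ n5)
    · exact diff_chain_conclude hik (hs ▸ hw ▸ n8) (hs ▸ hw ▸ n7)
    · exact diff_chain_conclude hik (hs ▸ hw ▸ n1) (hs ▸ hw ▸ n2)
    · exact diff_chain_conclude hik (hs ▸ hw ▸ n5) (hs ▸ hw ▸ n6)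
    · exact absurd (hs.trans hw.symm) hSne
    · -- W = B, S = B' : same chain, W ⊂ S
      exact (same_chain_false hfree hC hW hSF hk1 hkn hi1 hin hA hA' hAA'
        (hw ▸ n2) (hw ▸ n1) (hw ▸ n6) (hw ▸ n5)
        (hs ▸ n4) (hs ▸ n3) (hs ▸ n8) (hs ▸ n7)
        (Or.inr (by rw [hw, hs]; exact hBB'.subset))).elim
    · exact diff_chain_conclude hik (hs ▸ hw ▸ n3) (hs ▸ hw ▸ n4)
    · exact diff_chain_conclude hik (hs ▸ hw ▸ n7) (hs ▸ hw ▸ n8)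
    · -- W = B', S = B : same chain, S ⊂ W
      exact (same_chain_false hfree hC hW hSF hk1 hkn hi1 hin hA hA' hAA'
        (hw ▸ n4) (hw ▸ n3) (hw ▸ n8) (hw ▸ n7)
        (hs ▸ n2) (hs ▸ n1) (hs ▸ n6) (hs ▸ n5)
        (Or.inl (by rw [hw, hs]; exact hBB'.subset))).elim
    · exact absurd (hs.trans hw.symm) hSne
  refine ⟨main, ?_⟩
  rintro ⟨i₁, i₂, i₃, h12, h13, h23, ⟨a1, a2, a3, a4⟩, ⟨b1, b2, b3, b4⟩, ⟨c1, c2, c3, c4⟩⟩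
  have r1 := main i₁ a1 a2 a3 a4
  have r2 := main i₂ b1 b2 b3 b4
  have r3 := main i₃ c1 c2 c3 c4
  omega
end
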